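/- arXiv:1706.03291 — 2 statements merged into one kernel-verified Lean document; each statement's English description precedes it below -/
import Mathlib

section
/- Let K and L be essentially small tt-categories (K not assumed rigid), let F : K → L be a tt-functor and φ = Spc(F) : Spc(L) → Spc(K) the induced map. Then the following are equivalent: (a') F detects ⊗-nilpotence of objects, i.e. F(x) ≅ 0 implies x^⊗n ≅ 0 for some n ≥ 1; (b) φ is surjective on closed points, i.e. for every closed point P of Spc(K) there exists Q ∈ Spc(L) such that φ(Q) = P. -/
/-!
Basic notions of tensor-triangular geometry (Balmer), formalized from scratch:
tt-categories (pretriangulated + monoidal, with tensor exact in each variable),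
tt-ideals, prime tt-ideals, the Balmer spectrum `Spc` with its topology,
tensor powers of objects and morphisms, rigidity.
-/

open CategoryTheory Category Limits ZeroObject Pretriangulated MonoidalCategory

universe v u v' u'

namespace TT

variable (K : Type u) [Category.{v} K] [HasZeroObject K] [Preadditive K]
  [HasShift K ℤ] [∀ n : ℤ, (shiftFunctor K n).Additive] [Pretriangulated K]
  [MonoidalCategory K]

/-- The tensor is exact (triangulated) in each variable: tensoring a distinguished
triangle with an object (on either side) again yields a distinguished triangle. -/
def TensorExact : Prop :=
  ∀ (x : K) (T : Triangle K), (T ∈ distTriang K) →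
    (∃ h : x ⊗ T.obj₃ ⟶ (x ⊗ T.obj₁)⟦(1:ℤ)⟧,
      Triangle.mk (x ◁ T.mor₁) (x ◁ T.mor₂) h ∈ distTriang K) ∧
    (∃ h : T.obj₃ ⊗ x ⟶ (T.obj₁ ⊗ x)⟦(1:ℤ)⟧,
      Triangle.mk (T.mor₁ ▷ x) (T.mor₂ ▷ x) h ∈ distTriang K)

/-- Rigidity: every object `x` has a dual `x^∨`, i.e. takes part in an exact pairing
(coevaluation `η : 𝟙 ⟶ x^∨ ⊗ x` and evaluation `ε : x ⊗ x^∨ ⟶ 𝟙` satisfying the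
triangle identities, which yield the adjunction `x ⊗ - ⊣ x^∨ ⊗ -`). -/
def Rigid : Prop := ∀ x : K, ∃ xd : K, Nonempty (ExactPairing xd x)

variable {K}

/-- A tt-ideal: a (full, replete) class of objects closed under shifts, cones,
direct summands (retracts) and tensoring with arbitrary objects. -/
structure IsTTIdeal (I : Set K) : Prop where
  zero_mem : (0 : K) ∈ I
  shift_mem : ∀ (n : ℤ), ∀ x ∈ I, (x⟦n⟧ : K) ∈ I
  cone_mem : ∀ T : Triangle K, (T ∈ distTriang K) → T.obj₁ ∈ I → T.obj₂ ∈ I → T.obj₃ ∈ I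
  retract_mem : ∀ x z : K, z ∈ I → ∀ (i : x ⟶ z) (r : z ⟶ x), i ≫ r = 𝟙 x → x ∈ I
  tensor_mem : ∀ x ∈ I, ∀ y : K, x ⊗ y ∈ I
  tensor_mem' : ∀ x ∈ I, ∀ y : K, y ⊗ x ∈ I

/-- A prime tt-ideal: a proper tt-ideal `P` such that `x ⊗ y ∈ P` implies
`x ∈ P` or `y ∈ P`. -/
structure IsPrimeTTIdeal (P : Set K) extends IsTTIdeal P : Prop where
  ne_univ : P ≠ Set.univ
  mem_or_mem : ∀ x y : K, x ⊗ y ∈ P → x ∈ P ∨ y ∈ P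

variable (K) in
/-- The Balmer spectrum: the set of prime tt-ideals. -/
def Spc := {P : Set K // IsPrimeTTIdeal P}

/-- The Balmer topology on `Spc K`, generated by the basic open subsets
`U(x) = {P ∈ Spc K | x ∈ P}`. -/
instance : TopologicalSpace (Spc K) :=
  TopologicalSpace.generateFrom {U | ∃ x : K, U = {P : Spc K | x ∈ P.1}}

/-- The tt-ideal `⟨E⟩` generated by a class of objects `E`. -/
def ttIdealGen (E : Set K) : Set K := ⋂₀ {I : Set K | IsTTIdeal I ∧ E ⊆ I}

/-- `n`-fold tensor power of an object (`x^⊗0 = 𝟙`). -/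
def opow (x : K) : ℕ → K
  | 0 => 𝟙_ K
  | n + 1 => opow x n ⊗ x

/-- `n`-fold tensor power `f^⊗n` of a morphism. -/
def mpow {x y : K} (f : x ⟶ y) : ∀ n : ℕ, (opow x n ⟶ opow y n)
  | 0 => 𝟙 _
  | n + 1 => mpow f n ⊗ₘ f

end TT

open TT

/-!
If `F` detects ⊗-nilpotence and `P` is a closed, i.e. minimal, prime of `K`, the image under `F`
of the complement of `P` is a ⊗-multiplicative class of nonzero objects of `L`, so it avoids some
prime `Q` of `L`; then `F⁻¹(Q) ⊆ P`, and minimality forces equality. Conversely, if `F(x) ≅ 0`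
but no positive power of `x` vanishes, the powers of `x` avoid some prime of `K`, hence some
minimal prime `P`; a prime `Q` with `F⁻¹(Q) = P` would contain `F(x) ≅ 0`, putting `x` in `P`.
Both directions rest on Balmer's prime existence lemma: a tt-ideal maximal among those avoiding a
⊗-multiplicative class is prime.
-/

namespace TT

variable {C : Type u} [Category.{v} C] [HasZeroObject C] [Preadditive C]
  [HasShift C ℤ] [∀ n : ℤ, (shiftFunctor C n).Additive] [Pretriangulated C]
  [MonoidalCategory C]

lemma IsTTIdeal.mem_of_iso {I : Set C} (hI : IsTTIdeal I) {x y : C} (e : x ≅ y) (hy : y ∈ I) :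
    x ∈ I :=
  hI.retract_mem x y hy e.hom e.inv e.hom_inv_id

lemma IsTTIdeal.mem_of_isZero {I : Set C} (hI : IsTTIdeal I) {x : C} (hx : IsZero x) : x ∈ I :=
  hI.mem_of_iso hx.isoZero hI.zero_mem

lemma IsTTIdeal.eq_univ_of_unit_mem {I : Set C} (hI : IsTTIdeal I) (h : 𝟙_ C ∈ I) :
    I = Set.univ :=
  Set.eq_univ_of_forall fun y => hI.mem_of_iso (λ_ y).symm (hI.tensor_mem _ h y)

lemma IsPrimeTTIdeal.unit_notMem {P : Set C} (hP : IsPrimeTTIdeal P) : 𝟙_ C ∉ P :=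
  fun h => hP.ne_univ (hP.eq_univ_of_unit_mem h)

lemma IsPrimeTTIdeal.mem_of_opow_mem {P : Set C} (hP : IsPrimeTTIdeal P) {x : C} :
    ∀ {n : ℕ}, 1 ≤ n → opow x n ∈ P → x ∈ P
  | 0, h, _ => absurd h (Nat.not_succ_le_zero 0)
  | 1, _, h => hP.mem_of_iso (λ_ x).symm h
  | n + 2, _, h => (hP.mem_or_mem _ _ h).elim (hP.mem_of_opow_mem (Nat.le_add_left 1 n)) id

def opowAddIso (x : C) (n : ℕ) : ∀ m : ℕ, opow x (n + m) ≅ opow x n ⊗ opow x m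
  | 0 => (ρ_ (opow x n)).symm
  | m + 1 => whiskerRightIso (opowAddIso x n m) x ≪≫ α_ _ _ _

lemma isTTIdeal_sInter {c : Set (Set C)} (hc : ∀ I ∈ c, IsTTIdeal I) : IsTTIdeal (⋂₀ c) where
  zero_mem I hI := (hc I hI).zero_mem
  shift_mem n x hx I hI := (hc I hI).shift_mem n x (hx I hI)
  cone_mem T hT h₁ h₂ I hI := (hc I hI).cone_mem T hT (h₁ I hI) (h₂ I hI)
  retract_mem x z hz i r hir I hI := (hc I hI).retract_mem x z (hz I hI) i r hir
  tensor_mem x hx y I hI := (hc I hI).tensor_mem x (hx I hI) y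
  tensor_mem' x hx y I hI := (hc I hI).tensor_mem' x (hx I hI) y

lemma isTTIdeal_ttIdealGen (E : Set C) : IsTTIdeal (ttIdealGen E) :=
  isTTIdeal_sInter fun _ hI => hI.1

lemma subset_ttIdealGen (E : Set C) : E ⊆ ttIdealGen E :=
  fun _ hx _ hI => hI.2 hx

lemma ttIdealGen_subset {E I : Set C} (hI : IsTTIdeal I) (hE : E ⊆ I) : ttIdealGen E ⊆ I :=
  fun _ hx => hx I ⟨hI, hE⟩

lemma isTTIdeal_sUnion_of_isChain {c : Set (Set C)} (hc : ∀ I ∈ c, IsTTIdeal I)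
    (hchain : IsChain (· ⊆ ·) c) (hne : c.Nonempty) : IsTTIdeal (⋃₀ c) where
  zero_mem := hne.elim fun I hI => ⟨I, hI, (hc I hI).zero_mem⟩
  shift_mem := by
    rintro n x ⟨I, hI, hx⟩
    exact ⟨I, hI, (hc I hI).shift_mem n x hx⟩
  cone_mem := by
    rintro T hT ⟨I, hI, h₁⟩ ⟨J, hJ, h₂⟩
    rcases hchain.total hI hJ with hIJ | hJI
    · exact ⟨J, hJ, (hc J hJ).cone_mem T hT (hIJ h₁) h₂⟩
    · exact ⟨I, hI, (hc I hI).cone_mem T hT h₁ (hJI h₂)⟩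
  retract_mem := by
    rintro x z ⟨I, hI, hz⟩ i r hir
    exact ⟨I, hI, (hc I hI).retract_mem x z hz i r hir⟩
  tensor_mem := by
    rintro x ⟨I, hI, hx⟩ y
    exact ⟨I, hI, (hc I hI).tensor_mem x hx y⟩
  tensor_mem' := by
    rintro x ⟨I, hI, hx⟩ y
    exact ⟨I, hI, (hc I hI).tensor_mem' x hx y⟩

lemma isPrimeTTIdeal_sInter_of_isChain {c : Set (Set C)} (hc : ∀ P ∈ c, IsPrimeTTIdeal P)
    (hchain : IsChain (· ⊆ ·) c) (hne : c.Nonempty) : IsPrimeTTIdeal (⋂₀ c) where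
  toIsTTIdeal := isTTIdeal_sInter fun P hP => (hc P hP).toIsTTIdeal
  ne_univ h := hne.elim fun P hP =>
    (hc P hP).ne_univ (Set.eq_univ_of_univ_subset (h ▸ Set.sInter_subset_of_mem hP))
  mem_or_mem a b hab := by
    by_contra! h
    obtain ⟨⟨P, hP, haP⟩, ⟨Q, hQ, hbQ⟩⟩ : (∃ P ∈ c, a ∉ P) ∧ ∃ Q ∈ c, b ∉ Q := by
      simpa only [Set.mem_sInter, not_forall, exists_prop] using h
    rcases hchain.total hP hQ with hPQ | hQP
    · exact ((hc P hP).mem_or_mem a b (hab P hP)).elim haP fun hbP => hbQ (hPQ hbP)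
    · exact ((hc Q hQ).mem_or_mem a b (hab Q hQ)).elim (fun haQ => haP (hQP haQ)) hbQ

lemma exists_subset_minimal_isPrimeTTIdeal {P₀ : Set C} (hP₀ : IsPrimeTTIdeal P₀) :
    ∃ P ⊆ P₀, Minimal IsPrimeTTIdeal P := by
  obtain ⟨P, hPP₀, hP⟩ := zorn_superset_nonempty {P | IsPrimeTTIdeal P ∧ P ⊆ P₀}
    (fun c hc hchain hne => ⟨⋂₀ c,
      ⟨isPrimeTTIdeal_sInter_of_isChain (fun P hP => (hc hP).1) hchain hne,
        hne.elim fun P hP => (Set.sInter_subset_of_mem hP).trans (hc hP).2⟩,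
      fun _ => Set.sInter_subset_of_mem⟩)
    P₀ ⟨hP₀, subset_rfl⟩
  exact ⟨P, hPP₀, hP.1.1, fun Q hQ hQP => hP.2 ⟨hQ, hQP.trans hPP₀⟩ hQP⟩

namespace Spc

lemma isOpen_setOf_mem (x : C) : IsOpen {P : Spc C | x ∈ P.1} :=
  TopologicalSpace.GenerateOpen.basic _ ⟨x, rfl⟩

lemma specializes_iff {P Q : Spc C} : P ⤳ Q ↔ Q.1 ⊆ P.1 := by
  refine ⟨fun h x hx => h.mem_open (isOpen_setOf_mem x) hx, fun h => ?_⟩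
  rw [specializes_iff_forall_open]
  intro U hU hQU
  induction hU with
  | basic U hU =>
    obtain ⟨x, rfl⟩ := hU
    exact h hQU
  | univ => trivial
  | inter U V _ _ ihU ihV => exact ⟨ihU hQU.1, ihV hQU.2⟩
  | sUnion 𝒰 _ ih =>
    obtain ⟨U, hU, hQU⟩ := hQU
    exact ⟨U, hU, ih U hU hQU⟩

lemma isClosed_singleton_iff {P : Spc C} :
    IsClosed ({P} : Set (Spc C)) ↔ Minimal IsPrimeTTIdeal P.1 := by
  refine ⟨fun h => ⟨P.2, fun Q hQ hQP => ?_⟩, fun h => isClosed_of_closure_subset fun Q hQ => ?_⟩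
  · let R : Spc C := ⟨Q, hQ⟩
    have hR : R ∈ closure {P} := specializes_iff_mem_closure.1 (specializes_iff.2 hQP)
    rw [h.closure_eq, Set.mem_singleton_iff] at hR
    exact (congrArg Subtype.val hR).ge
  · exact Subtype.ext (h.eq_of_subset Q.2 (specializes_iff.1 (specializes_iff_mem_closure.2 hQ)))

end Spc

lemma isZero_tensor_of_isZero_right (hC : TensorExact C) (x : C) {y : C} (hy : IsZero y) :
    IsZero (x ⊗ y) := by
  obtain ⟨h, hT⟩ := (hC x _ (contractible_distinguished y)).1
  have hx0 : IsZero (x ⊗ (0 : C)) := Triangle.isZero₃_of_isIso₁ _ hT <| by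
    show IsIso (x ◁ 𝟙 y)
    rw [MonoidalCategory.whiskerLeft_id]
    infer_instance
  exact hx0.of_iso (whiskerLeftIso x hy.isoZero)

lemma isZero_tensor_of_isZero_left (hC : TensorExact C) (y : C) {x : C} (hx : IsZero x) :
    IsZero (x ⊗ y) := by
  obtain ⟨h, hT⟩ := (hC y _ (contractible_distinguished x)).2
  have h0y : IsZero ((0 : C) ⊗ y) := Triangle.isZero₃_of_isIso₁ _ hT <| by
    show IsIso (𝟙 x ▷ y)
    rw [MonoidalCategory.id_whiskerRight]
    infer_instance
  exact h0y.of_iso (whiskerRightIso hx.isoZero y)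

lemma isTTIdeal_setOf_isZero (hC : TensorExact C) : IsTTIdeal {y : C | IsZero y} where
  zero_mem := isZero_zero C
  shift_mem n _ hx := (shiftFunctor C n).map_isZero hx
  cone_mem T hT h₁ h₂ := Triangle.isZero₃_of_isZero₁₂ T hT h₁ h₂
  retract_mem x _ hz i r hir := by
    rw [Set.mem_ofPred_eq, IsZero.iff_id_eq_zero, ← hir, hz.eq_of_tgt i 0, zero_comp]
  tensor_mem _ hx y := isZero_tensor_of_isZero_left hC y hx
  tensor_mem' _ hx y := isZero_tensor_of_isZero_right hC y hx

lemma nonempty_tensor_shift_one_iso (hC : TensorExact C) (s t : C) :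
    Nonempty (s ⊗ t⟦(1 : ℤ)⟧ ≅ (s ⊗ t)⟦(1 : ℤ)⟧) := by
  -- Tensor the distinguished triangle `t ⟶ 0 ⟶ t⟦1⟧ ⟶ t⟦1⟧` with `s`: since the middle term
  -- `s ⊗ 0` vanishes, the connecting morphism supplied by exactness is an isomorphism.
  obtain ⟨h, hT⟩ := (hC s _ (rot_of_distTriang _ (contractible_distinguished t))).1
  have hh : IsIso h := (Triangle.isZero₂_iff_isIso₃ _ hT).1
    (isZero_tensor_of_isZero_right hC s (isZero_zero C))
  exact ⟨@asIso _ _ _ _ h hh⟩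

lemma nonempty_tensor_shift_neg_one_iso (hC : TensorExact C) (s t : C) :
    Nonempty (s ⊗ t⟦(-1 : ℤ)⟧ ≅ (s ⊗ t)⟦(-1 : ℤ)⟧) := by
  obtain ⟨e⟩ := nonempty_tensor_shift_one_iso hC s (t⟦(-1 : ℤ)⟧)
  exact ⟨(shiftShiftNeg _ 1).symm ≪≫ (shiftFunctor C (-1 : ℤ)).mapIso
    (e.symm ≪≫ whiskerLeftIso s (shiftNegShift t 1))⟩

lemma nonempty_tensor_shift_iso (hC : TensorExact C) (s : C) (n : ℤ) :
    ∀ t : C, Nonempty (s ⊗ t⟦n⟧ ≅ (s ⊗ t)⟦n⟧) := by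
  induction n using Int.induction_on with
  | zero =>
    exact fun t => ⟨whiskerLeftIso s ((shiftFunctorZero C ℤ).app t) ≪≫
      ((shiftFunctorZero C ℤ).app (s ⊗ t)).symm⟩
  | succ n ih =>
    intro t
    obtain ⟨e⟩ := ih (t⟦(1 : ℤ)⟧)
    obtain ⟨e₁⟩ := nonempty_tensor_shift_one_iso hC s t
    let a := shiftFunctorAdd' C 1 (n : ℤ) (n + 1) (by omega)
    exact ⟨whiskerLeftIso s (a.app t) ≪≫ e ≪≫ (shiftFunctor C (n : ℤ)).mapIso e₁ ≪≫
      (a.app (s ⊗ t)).symm⟩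
  | pred n ih =>
    intro t
    obtain ⟨e⟩ := ih (t⟦(-1 : ℤ)⟧)
    obtain ⟨e₁⟩ := nonempty_tensor_shift_neg_one_iso hC s t
    let a := shiftFunctorAdd' C (-1) (-(n : ℤ)) (-(n : ℤ) - 1) (by omega)
    exact ⟨whiskerLeftIso s (a.app t) ≪≫ e ≪≫ (shiftFunctor C (-(n : ℤ))).mapIso e₁ ≪≫
      (a.app (s ⊗ t)).symm⟩

section Symmetric

variable [SymmetricCategory C]

lemma IsTTIdeal.preimage_tensorRight (hC : TensorExact C) {J : Set C} (hJ : IsTTIdeal J)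
    (t : C) : IsTTIdeal {s : C | s ⊗ t ∈ J} where
  zero_mem := hJ.mem_of_isZero (isZero_tensor_of_isZero_left hC t (isZero_zero C))
  shift_mem n s hs := by
    obtain ⟨e⟩ := nonempty_tensor_shift_iso hC t n s
    exact hJ.mem_of_iso (β_ _ _ ≪≫ e ≪≫ (shiftFunctor C n).mapIso (β_ t s))
      (hJ.shift_mem n _ hs)
  cone_mem T hT h₁ h₂ := by
    obtain ⟨h, hT'⟩ := (hC t T hT).2
    exact hJ.cone_mem _ hT' h₁ h₂
  retract_mem x z hz i r hir :=
    hJ.retract_mem (x ⊗ t) (z ⊗ t) hz (i ▷ t) (r ▷ t)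
      (by rw [← comp_whiskerRight, hir, MonoidalCategory.id_whiskerRight])
  tensor_mem s hs y :=
    hJ.mem_of_iso (α_ s y t ≪≫ whiskerLeftIso s (β_ y t) ≪≫ (α_ s t y).symm)
      (hJ.tensor_mem _ hs y)
  tensor_mem' s hs y := hJ.mem_of_iso (α_ y s t) (hJ.tensor_mem' _ hs y)

lemma tensor_mem_ttIdealGen_insert_tensor (hC : TensorExact C) {Q : Set C} {a b s t : C}
    (hs : s ∈ ttIdealGen (insert a Q)) (ht : t ∈ ttIdealGen (insert b Q)) :
    s ⊗ t ∈ ttIdealGen (insert (a ⊗ b) Q) := by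
  set J := ttIdealGen (insert (a ⊗ b) Q)
  have hJ : IsTTIdeal J := isTTIdeal_ttIdealGen _
  have hQJ : Q ⊆ J := (Set.subset_insert _ _).trans (subset_ttIdealGen _)
  have hsb : s ⊗ b ∈ J := by
    refine ttIdealGen_subset (hJ.preimage_tensorRight hC b) ?_ hs
    rintro u (rfl | hu)
    · exact subset_ttIdealGen _ (Set.mem_insert _ _)
    · exact hJ.tensor_mem u (hQJ hu) b
  have hts : t ⊗ s ∈ J := by
    refine ttIdealGen_subset (hJ.preimage_tensorRight hC s) ?_ ht
    rintro u (rfl | hu)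
    · exact hJ.mem_of_iso (β_ _ _) hsb
    · exact hJ.tensor_mem u (hQJ hu) s
  exact hJ.mem_of_iso (β_ s t) hts

variable {S : Set C}

lemma isPrimeTTIdeal_of_maximal_disjoint (hC : TensorExact C) (hne : S.Nonempty)
    (hmul : ∀ s ∈ S, ∀ t ∈ S, ∃ u ∈ S, Nonempty (u ≅ s ⊗ t)) {M : Set C}
    (hM : Maximal (fun I => IsTTIdeal I ∧ Disjoint S I) M) : IsPrimeTTIdeal M where
  toIsTTIdeal := hM.1.1
  ne_univ h := hne.elim fun s hs => Set.disjoint_left.1 hM.1.2 hs (h ▸ Set.mem_univ s)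
  mem_or_mem a b hab := by
    have meets : ∀ x ∉ M, ∃ s ∈ S, s ∈ ttIdealGen (insert x M) := by
      intro x hx
      by_contra! hdisj
      have hMx := hM.eq_of_subset ⟨isTTIdeal_ttIdealGen _, Set.disjoint_left.2 hdisj⟩
        ((Set.subset_insert _ _).trans (subset_ttIdealGen _))
      exact hx (hMx ▸ subset_ttIdealGen _ (Set.mem_insert x M))
    by_contra! h
    obtain ⟨s, hsS, hs⟩ := meets a h.1
    obtain ⟨t, htS, ht⟩ := meets b h.2
    have hst : s ⊗ t ∈ M := ttIdealGen_subset hM.1.1 (Set.insert_subset hab subset_rfl)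
      (tensor_mem_ttIdealGen_insert_tensor hC hs ht)
    obtain ⟨u, huS, ⟨e⟩⟩ := hmul s hsS t htS
    exact Set.disjoint_left.1 hM.1.2 huS (hM.1.1.mem_of_iso e hst)

lemma exists_isPrimeTTIdeal_disjoint (hC : TensorExact C) (hne : S.Nonempty)
    (hmul : ∀ s ∈ S, ∀ t ∈ S, ∃ u ∈ S, Nonempty (u ≅ s ⊗ t)) (hnz : ∀ s ∈ S, ¬ IsZero s) :
    ∃ P : Set C, IsPrimeTTIdeal P ∧ Disjoint S P := by
  obtain ⟨M, -, hM⟩ := zorn_subset_nonempty {I | IsTTIdeal I ∧ Disjoint S I}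
    (fun c hc hchain hcne => ⟨⋃₀ c,
      ⟨isTTIdeal_sUnion_of_isChain (fun I hI => (hc hI).1) hchain hcne,
        Set.disjoint_sUnion_right.2 fun I hI => (hc hI).2⟩,
      fun _ => Set.subset_sUnion_of_mem⟩)
    {y | IsZero y} ⟨isTTIdeal_setOf_isZero hC, Set.disjoint_left.2 hnz⟩
  exact ⟨M, isPrimeTTIdeal_of_maximal_disjoint hC hne hmul hM, hM.1.2⟩

lemma exists_isClosed_singleton_notMem (hC : TensorExact C) {x : C}
    (hx : ∀ n : ℕ, 1 ≤ n → ¬ IsZero (opow x n)) :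
    ∃ P : Spc C, IsClosed ({P} : Set (Spc C)) ∧ x ∉ P.1 := by
  obtain ⟨P₀, hP₀, hdisj⟩ := exists_isPrimeTTIdeal_disjoint hC
    (S := Set.range fun n => opow x (n + 1)) ⟨_, 0, rfl⟩
    (by
      rintro _ ⟨n, rfl⟩ _ ⟨m, rfl⟩
      exact ⟨_, ⟨n + 1 + m, rfl⟩, ⟨opowAddIso x (n + 1) (m + 1)⟩⟩)
    (by
      rintro _ ⟨n, rfl⟩
      exact hx (n + 1) (Nat.le_add_left 1 n))
  obtain ⟨P, hPP₀, hP⟩ := exists_subset_minimal_isPrimeTTIdeal hP₀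
  refine ⟨⟨P, hP.1⟩, Spc.isClosed_singleton_iff.2 hP, fun hxP => ?_⟩
  exact Set.disjoint_left.1 hdisj ⟨0, rfl⟩ (hPP₀ (hP.1.tensor_mem' x hxP (𝟙_ C)))

end Symmetric

section Functor

variable {D : Type u'} [Category.{v'} D] [HasZeroObject D] [Preadditive D]
  [HasShift D ℤ] [∀ n : ℤ, (shiftFunctor D n).Additive] [Pretriangulated D]
  [MonoidalCategory D]
variable (F : C ⥤ D) [F.CommShift ℤ] [F.IsTriangulated] [F.Monoidal]

lemma IsTTIdeal.comap {Q : Set D} (hQ : IsTTIdeal Q) : IsTTIdeal {x : C | F.obj x ∈ Q} where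
  zero_mem := hQ.mem_of_isZero (F.map_isZero (isZero_zero C))
  shift_mem n x hx := hQ.mem_of_iso ((F.commShiftIso n).app x) (hQ.shift_mem n _ hx)
  cone_mem T hT h₁ h₂ := hQ.cone_mem _ (F.map_distinguished T hT) h₁ h₂
  retract_mem x z hz i r hir :=
    hQ.retract_mem _ _ hz (F.map i) (F.map r) (by rw [← F.map_comp, hir, F.map_id])
  tensor_mem x hx y :=
    hQ.mem_of_iso (Functor.Monoidal.μIso F x y).symm (hQ.tensor_mem _ hx (F.obj y))
  tensor_mem' x hx y :=
    hQ.mem_of_iso (Functor.Monoidal.μIso F y x).symm (hQ.tensor_mem' _ hx (F.obj y))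

lemma IsPrimeTTIdeal.comap {Q : Set D} (hQ : IsPrimeTTIdeal Q) :
    IsPrimeTTIdeal {x : C | F.obj x ∈ Q} where
  toIsTTIdeal := hQ.toIsTTIdeal.comap F
  ne_univ h := by
    have hunit : 𝟙_ C ∈ {x : C | F.obj x ∈ Q} := h.symm ▸ Set.mem_univ _
    exact hQ.unit_notMem (hQ.mem_of_iso (Functor.Monoidal.εIso F) hunit)
  mem_or_mem x y h := hQ.mem_or_mem _ _ (hQ.mem_of_iso (Functor.Monoidal.μIso F x y) h)

variable [SymmetricCategory D]

lemma exists_preimage_eq_of_minimal (hD : TensorExact D)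
    (hF : ∀ x : C, IsZero (F.obj x) → ∃ n : ℕ, 1 ≤ n ∧ IsZero (opow x n))
    {P : Spc C} (hP : Minimal IsPrimeTTIdeal P.1) :
    ∃ Q : Spc D, {x : C | F.obj x ∈ Q.1} = P.1 := by
  obtain ⟨Q, hQ, hdisj⟩ := exists_isPrimeTTIdeal_disjoint hD (S := F.obj '' P.1ᶜ)
    ⟨_, 𝟙_ C, P.2.unit_notMem, rfl⟩
    (by
      rintro _ ⟨x, hx, rfl⟩ _ ⟨y, hy, rfl⟩
      refine ⟨_, ⟨x ⊗ y, ?_, rfl⟩, ⟨(Functor.Monoidal.μIso F x y).symm⟩⟩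
      exact fun hxy => (P.2.mem_or_mem x y hxy).elim hx hy)
    (by
      rintro _ ⟨x, hx, rfl⟩ hFx
      obtain ⟨n, hn, hxn⟩ := hF x hFx
      exact hx (P.2.mem_of_opow_mem hn (P.2.mem_of_isZero hxn)))
  refine ⟨⟨Q, hQ⟩, hP.eq_of_subset (hQ.comap F) fun x hx => ?_⟩
  by_contra hxP
  exact Set.disjoint_left.1 hdisj ⟨x, hxP, rfl⟩ hx

end Functor

end TT

variable {K : Type u} [Category.{v} K] [HasZeroObject K] [Preadditive K]
  [HasShift K ℤ] [∀ n : ℤ, (shiftFunctor K n).Additive] [Pretriangulated K]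
  [MonoidalCategory K] [SymmetricCategory K] [EssentiallySmall.{v} K]
variable {L : Type u'} [Category.{v'} L] [HasZeroObject L] [Preadditive L]
  [HasShift L ℤ] [∀ n : ℤ, (shiftFunctor L n).Additive] [Pretriangulated L]
  [MonoidalCategory L] [SymmetricCategory L] [EssentiallySmall.{v'} L]

/-- **Theorem (Balmer).** Let `K`, `L` be essentially small tt-categories (`K` not assumed
rigid) and `F : K ⥤ L` a tt-functor. Then `F` detects ⊗-nilpotence of objects
(`F(x) ≅ 0 ⟹ x^⊗n ≅ 0` for some `n ≥ 1`) if and only if the induced map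
`φ = Spc F : Spc L → Spc K`, `Q ↦ F⁻¹(Q)`, is surjective on closed points. -/
theorem detects_object_nilpotence_iff_surjective_on_closed_points
    (hK : TensorExact K) (hL : TensorExact L)
    (F : K ⥤ L) [F.CommShift ℤ] [F.IsTriangulated] [F.Monoidal] :
    (∀ x : K, IsZero (F.obj x) → ∃ n : ℕ, 1 ≤ n ∧ IsZero (opow x n)) ↔
      (∀ P : Spc K, IsClosed ({P} : Set (Spc K)) →
        ∃ Q : Spc L, {x : K | F.obj x ∈ Q.1} = P.1) := by
  refine ⟨fun hF P hP => exists_preimage_eq_of_minimal F hL hF (Spc.isClosed_singleton_iff.1 hP),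
    fun hφ x hFx => ?_⟩
  by_contra! hx
  obtain ⟨P, hP, hxP⟩ := exists_isClosed_singleton_notMem hK hx
  obtain ⟨Q, hQ⟩ := hφ P hP
  exact hxP (hQ ▸ Q.2.mem_of_isZero hFx)
end

section
/- Let K be a tt-category (not necessarily rigid) and let x ∈ K be a rigid object with dual x^∨, coevaluation η_x : 𝟙 → x^∨ ⊗ x and evaluation ε_x : x ⊗ x^∨ → 𝟙 satisfying (ε_x ⊗ x) ∘ (x ⊗ η_x) = 1_x. Let ξ_x : w_x → 𝟙 be a homotopy fiber of η_x, i.e. part of a distinguished triangle w_x →ξ_x→ 𝟙 →η_x→ x^∨ ⊗ x → Σw_x. Then x ⊗ ξ_x = 0, and consequently ξ_x ⊗ cone(ξ_x) = 0 (where cone(ξ_x) ≅ x^∨ ⊗ x). -/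
/-!
Basic notions of tensor-triangular geometry (Balmer), formalized from scratch:
tt-categories (pretriangulated + monoidal, with tensor exact in each variable),
tt-ideals, prime tt-ideals, the Balmer spectrum `Spc` with its topology,
tensor powers of objects and morphisms, rigidity.
-/

open CategoryTheory Category Limits ZeroObject Pretriangulated MonoidalCategory

universe v u v' u'

open TT

variable {K : Type u} [Category.{v} K] [HasZeroObject K] [Preadditive K]
  [HasShift K ℤ] [∀ n : ℤ, (shiftFunctor K n).Additive] [Pretriangulated K]
  [MonoidalCategory K] [SymmetricCategory K] [EssentiallySmall.{v} K]

/-!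
The coevaluation `η` becomes a split monomorphism after tensoring with `x`, by the triangle
identity. Since `ξ ≫ η = 0` in the distinguished triangle, `x ⊗ ξ` is killed by a split
monomorphism, hence vanishes. Tensoring further with `xd` and braiding moves the vanishing
to `ξ ⊗ (xd ⊗ x)`. No additivity of `⊗` is assumed; that whiskering preserves zero morphisms
comes from exactness, as `c ⊗ 0` is a cone of the isomorphism `c ◁ 𝟙 (𝟙_ C)`.
-/

namespace TT.TensorExact

variable {C : Type u} [Category.{v} C] [HasZeroObject C] [Preadditive C]
  [HasShift C ℤ] [∀ n : ℤ, (shiftFunctor C n).Additive] [Pretriangulated C]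
  [MonoidalCategory C]

lemma isZero_tensor_zero (hC : TensorExact C) (c : C) : IsZero (c ⊗ (0 : C)) := by
  obtain ⟨⟨_, hT⟩, -⟩ := hC c (contractibleTriangle (𝟙_ C)) (contractible_distinguished _)
  refine Triangle.isZero₃_of_isIso₁ _ hT ?_
  change IsIso (c ◁ 𝟙 (𝟙_ C))
  rw [MonoidalCategory.whiskerLeft_id]
  infer_instance

lemma whiskerLeft_zero (hC : TensorExact C) (c : C) {a b : C} : c ◁ (0 : a ⟶ b) = 0 := by
  rw [← zero_comp (X := a) (Y := (0 : C)) (f := (0 : (0 : C) ⟶ b)),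
    MonoidalCategory.whiskerLeft_comp, (hC.isZero_tensor_zero c).eq_of_src (c ◁ _) 0, comp_zero]

lemma whiskerLeft_eq_zero_of_comp_coevaluation_eq_zero (hC : TensorExact C)
    {x xd w : C} {η : 𝟙_ C ⟶ xd ⊗ x} {ε : x ⊗ xd ⟶ 𝟙_ C}
    (hdual : (ρ_ x).inv ≫ (x ◁ η) ≫ (α_ x xd x).inv ≫ (ε ▷ x) ≫ (λ_ x).hom = 𝟙 x)
    {f : w ⟶ 𝟙_ C} (hf : f ≫ η = 0) : x ◁ f = 0 := by
  have hsplit : (x ◁ η) ≫ (α_ x xd x).inv ≫ (ε ▷ x) ≫ (λ_ x).hom ≫ (ρ_ x).inv = 𝟙 _ := by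
    rw [Iso.inv_comp_eq, comp_id] at hdual
    simp only [reassoc_of% hdual, Iso.hom_inv_id]
  have : Mono (x ◁ η) := (SplitMono.mk _ hsplit).mono
  rw [← cancel_mono (x ◁ η), ← MonoidalCategory.whiskerLeft_comp, hf, hC.whiskerLeft_zero,
    zero_comp]

end TT.TensorExact

lemma whiskerRight_eq_zero_of_whiskerLeft_eq_zero {C : Type u} [Category.{v} C] [Preadditive C]
    [MonoidalCategory C] [BraidedCategory C] {a b : C} {f : a ⟶ b} {c : C} (hf : c ◁ f = 0) :
    f ▷ c = 0 := by
  rw [← cancel_mono (β_ b c).hom, BraidedCategory.braiding_naturality_left, hf, comp_zero,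
    zero_comp]

/-- **Lemma (Balmer).** Let `K` be a tt-category (not necessarily rigid) and `x` a rigid
object with dual `xd`, coevaluation `η : 𝟙 ⟶ xd ⊗ x` and evaluation `ε : x ⊗ xd ⟶ 𝟙`
satisfying `(ε ⊗ x) ∘ (x ⊗ η) = 1ₓ`. Let `ξ : w ⟶ 𝟙` be a homotopy fiber of `η`, i.e.
part of a distinguished triangle `w ⟶ 𝟙 ⟶ xd ⊗ x ⟶ Σw`. Then `x ⊗ ξ = 0` and
consequently `ξ ⊗ cone(ξ) = 0`, where `cone(ξ) = xd ⊗ x`. -/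
theorem whiskerLeft_fiber_of_coevaluation_eq_zero
    (hK : TensorExact K) (x xd : K) (η : 𝟙_ K ⟶ xd ⊗ x) (ε : x ⊗ xd ⟶ 𝟙_ K)
    (hdual : (ρ_ x).inv ≫ (x ◁ η) ≫ (α_ x xd x).inv ≫ (ε ▷ x) ≫ (λ_ x).hom = 𝟙 x)
    (w : K) (ξ : w ⟶ 𝟙_ K) (ζ : xd ⊗ x ⟶ w⟦(1:ℤ)⟧)
    (htri : Triangle.mk ξ η ζ ∈ distTriang K) :
    x ◁ ξ = 0 ∧ ξ ▷ (xd ⊗ x) = 0 := by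
  have hx : x ◁ ξ = 0 :=
    hK.whiskerLeft_eq_zero_of_comp_coevaluation_eq_zero hdual (comp_distTriang_mor_zero₁₂ _ htri)
  refine ⟨hx, whiskerRight_eq_zero_of_whiskerLeft_eq_zero ?_⟩
  rw [tensor_whiskerLeft, hx, hK.whiskerLeft_zero, zero_comp, comp_zero]
end
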